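/- Let A be a finite type and n ≥ 3. Then the group of alternating conservative permutations of (Fin n → A) equals the subgroup of Perm(Fin n → A) generated by the 3-cycles (x y z) of triples of pairwise distinct words x, y, z : Fin n → A that agree on all coordinates outside some 3-element subset S of Fin n and whose restrictions to S have equal multisets of entries. -/

import Mathlib

/-- The weight of a word `x : Fin n → A` is the multiset of its entries. -/
def wordWeight {A : Type*} {n : ℕ} (x : Fin n → A) : Multiset A :=
  Multiset.map x Finset.univ.val

/-- A permutation of words is *alternating conservative* if it preserves the weight of
every word and its restriction to each weight class is an even permutation. -/
def IsAltConservative {A : Type*} [Fintype A] [DecidableEq A] {n : ℕ}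
    (f : Equiv.Perm (Fin n → A)) : Prop :=
  (∀ x : Fin n → A, wordWeight (f x) = wordWeight x) ∧
  ∀ (c : Multiset A)
    (h : ∀ x : Fin n → A, wordWeight x = c ↔ wordWeight (f x) = c),
    Equiv.Perm.sign (f.subtypePerm (p := fun x => wordWeight x = c) (fun x => (h x).symm)) = 1

/-!
Inside one weight class, call two words adjacent when one is obtained from the other by
transposing two coordinates. This graph is connected: a word can always be moved, by one
transposition, one coordinate closer to any other word of the same weight. If `v` and `w`
are both adjacent to `u`, the 3-cycle `(u v w)` is local, or the product of two local 3-cycles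
through `u ∘ swap i b` when the two transpositions are disjoint. For any connected graph, the
3-cycles along its paths of length two generate the alternating group of its vertices, by
telescoping `(a b x) = (a y x) (a b y)` along geodesics. Hence every even permutation of a
weight class is generated, and an alternating conservative permutation is the product of its
restrictions to the weight classes. Conversely, a local 3-cycle is an even permutation of a
single weight class.
-/

theorem SimpleGraph.Reachable.exists_adj_dist_lt {X : Type*} {G : SimpleGraph X} {a x : X}
    (h : G.Reachable a x) (hax : a ≠ x) : ∃ y, G.Adj x y ∧ G.dist a y < G.dist a x := by
  obtain ⟨p, hp⟩ := h.symm.exists_walk_length_eq_dist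
  cases p with
  | nil => exact absurd rfl hax
  | cons hxy q =>
    refine ⟨_, hxy, ?_⟩
    rw [SimpleGraph.dist_comm, G.dist_comm (u := a), ← hp, SimpleGraph.Walk.length_cons]
    exact Nat.lt_succ_of_le (SimpleGraph.dist_le q)

namespace Equiv.Perm

section ThreeCycles

variable {X : Type*} [DecidableEq X]

theorem swap_mul_swap_eq_mul (a b x y : X) :
    swap a x * swap a b = (swap a x * swap a y) * (swap a y * swap a b) := by
  simp [mul_assoc]

-- `swap a x * swap a b` is the 3-cycle `a ↦ b ↦ x ↦ a`.
theorem swap_mul_swap_rotate {a b x : X} (hab : a ≠ b) (hax : a ≠ x) (hbx : b ≠ x) :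
    swap a x * swap a b = swap b a * swap b x := by
  ext t
  simp only [Perm.mul_apply, swap_apply_def]
  split_ifs <;> simp_all

variable {G : SimpleGraph X} {H : Subgroup (Perm X)}

theorem swap_mul_swap_mem_of_preconnected_of_adj (hG : G.Preconnected)
    (hH : ∀ a b x, G.Adj a b → G.Adj a x → b ≠ x → swap a x * swap a b ∈ H)
    {a b x : X} (hab : G.Adj a b) (hax : a ≠ x) (hbx : b ≠ x) :
    swap a x * swap a b ∈ H := by
  induction hd : G.dist a x using Nat.strong_induction_on generalizing a b x with
  | _ N ih =>
  by_cases hadj : G.Adj a x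
  · exact hH a b x hab hadj hbx
  obtain ⟨y, hxy, hy⟩ := (hG a x).exists_adj_dist_lt hax
  have hay : a ≠ y := by rintro rfl; exact hadj hxy.symm
  rcases eq_or_ne b y with rfl | hby
  · rw [swap_mul_swap_rotate hab.ne hax hbx]
    exact hH b x a hxy.symm hab.symm hax.symm
  rw [swap_mul_swap_eq_mul a b x y]
  refine mul_mem ?_ (ih _ (hd ▸ hy) hab hay hby rfl)
  rw [swap_mul_swap_rotate hay hax hxy.ne.symm]
  exact ih _ (by rw [G.dist_comm]; omega) hxy.symm hay.symm hax.symm rfl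

theorem swap_mul_swap_mem_of_preconnected (hG : G.Preconnected)
    (hH : ∀ a b x, G.Adj a b → G.Adj a x → b ≠ x → swap a x * swap a b ∈ H)
    {a b x : X} (hab : a ≠ b) (hax : a ≠ x) (hbx : b ≠ x) :
    swap a x * swap a b ∈ H := by
  induction hd : G.dist a b using Nat.strong_induction_on generalizing b x with
  | _ N ih =>
  by_cases hadj : G.Adj a b
  · exact swap_mul_swap_mem_of_preconnected_of_adj hG hH hadj hax hbx
  obtain ⟨y, hby, hy⟩ := (hG a b).exists_adj_dist_lt hab
  have hay : a ≠ y := by rintro rfl; exact hadj hby.symm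
  rcases eq_or_ne y x with rfl | hyx
  · rw [swap_mul_swap_rotate hab hax hbx]
    exact swap_mul_swap_mem_of_preconnected_of_adj hG hH hby hab.symm hax.symm
  rw [swap_mul_swap_eq_mul a b x y]
  refine mul_mem (ih _ (hd ▸ hy) hay hax hyx rfl) ?_
  rw [swap_mul_swap_rotate hab hay hby.ne]
  exact swap_mul_swap_mem_of_preconnected_of_adj hG hH hby hab.symm hay.symm

theorem alternatingGroup_le_of_preconnected [Fintype X] (hG : G.Preconnected)
    (hH : ∀ a b x, G.Adj a b → G.Adj a x → b ≠ x → swap a x * swap a b ∈ H) :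
    alternatingGroup X ≤ H := by
  rw [← closure_three_cycles_eq_alternating, Subgroup.closure_le]
  intro σ hσ
  obtain ⟨a, ha⟩ := Finset.card_pos.mp (hσ.card_support.symm ▸ three_pos : 0 < σ.support.card)
  have hnodup := hσ.nodup_iff_mem_support.mpr ha
  simp only [List.nodup_cons, List.mem_cons, List.not_mem_nil, or_false, not_or] at hnodup
  obtain ⟨⟨h₁, h₂⟩, h₃, -⟩ := hnodup
  rw [hσ.eq_swap_mul_swap_iff_mem_support.mpr ha, swap_comm a]
  exact swap_mul_swap_mem_of_preconnected hG hH h₃ (Ne.symm h₁) (Ne.symm h₂)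

end ThreeCycles

section Fibers

variable {X C : Type*} [Fintype X] [DecidableEq C] {f : X → C}

theorem mem_of_forall_ofSubtype_subtypePerm_mem {H : Subgroup (Perm X)} {g : Perm X}
    (hg : ∀ x, f (g x) = f x)
    (hH : ∀ c, ofSubtype (g.subtypePerm (p := fun x => f x = c) (fun x => by rw [hg])) ∈ H) :
    g ∈ H := by
  have key : ∀ s : Finset C,
      ofSubtype (g.subtypePerm (p := fun x => f x ∈ s) (fun x => by rw [hg])) ∈ H := by
    intro s
    induction s using Finset.induction_on with
    | empty =>
      convert H.one_mem
      ext x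
      exact ofSubtype_apply_of_not_mem _ (Finset.notMem_empty _)
    | insert c s hc ih =>
      convert mul_mem (hH c) ih using 1
      ext x
      by_cases hxc : f x = c
      · simp [ofSubtype_apply_of_mem, ofSubtype_apply_of_not_mem, hxc, hc]
      by_cases hxs : f x ∈ s
      · simp [ofSubtype_apply_of_mem, ofSubtype_apply_of_not_mem, hxc, hxs, hg]
      · simp [ofSubtype_apply_of_not_mem, hxc, hxs]
  simpa [ofSubtype_subtypePerm] using key (Finset.univ.image f)

variable [DecidableEq X] (f) in
def fiberwiseAlternating : Subgroup (Perm X) where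
  carrier := {g | (∀ x, f (g x) = f x) ∧
    ∀ (c : C) (h : ∀ x, f x = c ↔ f (g x) = c),
      sign (g.subtypePerm (p := fun x => f x = c) (fun x => (h x).symm)) = 1}
  one_mem' := ⟨fun _ => rfl, fun c _ => by rw [subtypePerm_one, map_one]⟩
  mul_mem' := by
    rintro g₁ g₂ ⟨hg₁, hs₁⟩ ⟨hg₂, hs₂⟩
    refine ⟨fun x => (hg₁ _).trans (hg₂ x), fun c _ => ?_⟩
    rw [← subtypePerm_mul g₁ g₂ (fun x => by rw [hg₁]) (fun x => by rw [hg₂]), map_mul,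
      hs₁ c (fun x => by rw [hg₁]), hs₂ c (fun x => by rw [hg₂]), mul_one]
  inv_mem' := by
    rintro g ⟨hg, hs⟩
    have hg' : ∀ x, f (g⁻¹ x) = f x := fun x => by simpa using (hg (g⁻¹ x)).symm
    refine ⟨hg', fun c _ => ?_⟩
    rw [subtypePerm_inv g (fun x => by rw [hg']), map_inv, hs c (fun x => by rw [hg]), inv_one]

theorem mem_fiberwiseAlternating_of_sign_eq_one [DecidableEq X] {σ : Perm X} {c₀ : C}
    (hσ : ∀ x, σ x ≠ x → f x = c₀) (hs : sign σ = 1) : σ ∈ fiberwiseAlternating f := by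
  have hf : ∀ x, f (σ x) = f x := fun x => by
    by_cases hx : σ x = x
    · rw [hx]
    · rw [hσ x hx, hσ (σ x) (fun h => hx (σ.injective h))]
  refine ⟨hf, fun c h => ?_⟩
  by_cases hc : c = c₀
  · subst hc
    rwa [← sign_ofSubtype, ofSubtype_subtypePerm _ hσ]
  · convert map_one sign
    ext x
    by_contra hx
    exact hc (x.2.symm.trans (hσ x hx))

end Fibers

end Equiv.Perm

section Words

open Equiv Finset

variable {A : Type*} {n : ℕ}

theorem wordWeight_eq_add (x : Fin n → A) (S : Finset (Fin n)) :
    wordWeight x = S.val.map x + Sᶜ.val.map x := by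
  have h : (S.disjUnion Sᶜ disjoint_compl_right).val = univ.val := by
    rw [disjUnion_eq_union, union_compl]
  rw [wordWeight, ← h, disjUnion_val, Multiset.map_add]

theorem wordWeight_eq_iff_map_eq {x y : Fin n → A} {S : Finset (Fin n)}
    (h : ∀ i ∉ S, x i = y i) : wordWeight x = wordWeight y ↔ S.val.map x = S.val.map y := by
  have hc : Sᶜ.val.map x = Sᶜ.val.map y :=
    Multiset.map_congr rfl fun i hi => h i (mem_compl.mp (mem_val.mp hi))
  rw [wordWeight_eq_add x S, wordWeight_eq_add y S, hc, add_left_inj]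

theorem wordWeight_comp_perm (x : Fin n → A) (e : Perm (Fin n)) :
    wordWeight (x ∘ e) = wordWeight x := by
  rw [wordWeight, ← Multiset.map_map, Multiset.map_univ_val_equiv, wordWeight]

theorem comp_swap_eq_self_iff {x : Fin n → A} {i j : Fin n} : x ∘ swap i j = x ↔ x i = x j := by
  refine ⟨fun h => by simpa using congrFun h j, fun h => funext fun k => ?_⟩
  rcases eq_or_ne k i with rfl | hki
  · simpa using h.symm
  rcases eq_or_ne k j with rfl | hkj
  · simpa using h
  · simp [swap_apply_of_ne_of_ne hki hkj]

variable [DecidableEq A]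

theorem exists_swap_hammingDist_lt {u x : Fin n → A}
    (hw : wordWeight u = wordWeight x) (hux : u ≠ x) :
    ∃ i j, x i ≠ x j ∧ hammingDist u (x ∘ swap i j) < hammingDist u x := by
  obtain ⟨i, hi⟩ := Function.ne_iff.mp hux
  set D : Finset (Fin n) := {k | u k ≠ x k}
  have hD : D.val.map u = D.val.map x := (wordWeight_eq_iff_map_eq (by simp [D])).mp hw
  obtain ⟨j, hjD, hj⟩ : ∃ j ∈ D.val, x j = u i :=
    Multiset.mem_map.mp (hD ▸ Multiset.mem_map_of_mem u (by simp [D, hi]))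
  refine ⟨i, j, hj ▸ Ne.symm hi, card_lt_card ⟨fun k hk => ?_, fun hsub => ?_⟩⟩
  · simp only [D, mem_val, mem_filter, mem_univ, true_and] at hk hjD ⊢
    rcases eq_or_ne k i with rfl | hki
    · simp [hj] at hk
    rcases eq_or_ne k j with rfl | hkj
    · exact hjD
    · simpa [swap_apply_of_ne_of_ne hki hkj] using hk
  · simpa [hj] using hsub (by simp [D, hi] : i ∈ D)

def swapGraph (c : Multiset A) : SimpleGraph {x : Fin n → A // wordWeight x = c} where
  Adj u v := u ≠ v ∧ ∃ i j, (v : Fin n → A) = u ∘ swap i j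
  symm := ⟨fun _ _ ⟨huv, i, j, hv⟩ => ⟨huv.symm, i, j, by rw [hv]; funext; simp⟩⟩
  loopless := ⟨fun _ h => h.1 rfl⟩

theorem swapGraph_preconnected (c : Multiset A) : (swapGraph (n := n) c).Preconnected := by
  intro u x
  induction hd : hammingDist (u : Fin n → A) x using Nat.strong_induction_on generalizing x with
  | _ N ih =>
  rcases eq_or_ne u x with rfl | hux
  · rfl
  obtain ⟨i, j, hij, hlt⟩ :=
    exists_swap_hammingDist_lt (u.2.trans x.2.symm) (Subtype.coe_ne_coe.mpr hux)
  let y : {x : Fin n → A // wordWeight x = c} :=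
    ⟨x ∘ swap i j, (wordWeight_comp_perm _ _).trans x.2⟩
  have hxy : (swapGraph c).Adj x y :=
    ⟨fun h => hij (comp_swap_eq_self_iff.mp (congrArg Subtype.val h).symm), i, j, rfl⟩
  exact (ih _ (hd ▸ hlt) y rfl).trans hxy.symm.reachable

variable (A n) in
def localThreeCycles : Set (Perm (Fin n → A)) :=
  {σ | ∃ (S : Finset (Fin n)) (x y z : Fin n → A),
    S.card = 3 ∧ x ≠ y ∧ x ≠ z ∧ y ≠ z ∧
    (∀ i ∉ S, x i = y i) ∧ (∀ i ∉ S, x i = z i) ∧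
    Multiset.map x S.val = Multiset.map y S.val ∧
    Multiset.map x S.val = Multiset.map z S.val ∧
    σ = swap x z * swap x y}

theorem swap_mul_swap_comp_swap_mem_closure_of_card_le_three (hn : 3 ≤ n)
    {T : Finset (Fin n)} (hT : #T ≤ 3) {u : Fin n → A} {i j k l : Fin n}
    (hi : i ∈ T) (hj : j ∈ T) (hk : k ∈ T) (hl : l ∈ T)
    (huv : u ≠ u ∘ swap i j) (huw : u ≠ u ∘ swap k l) (hvw : u ∘ swap i j ≠ u ∘ swap k l) :
    swap u (u ∘ swap k l) * swap u (u ∘ swap i j) ∈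
      Subgroup.closure (localThreeCycles A n) := by
  obtain ⟨S, hTS, hS⟩ := exists_superset_card_eq hT (by simpa using hn)
  have agree : ∀ {a b}, a ∈ S → b ∈ S → ∀ m ∉ S, u m = (u ∘ swap a b) m := fun ha hb m hm => by
    rw [Function.comp_apply, swap_apply_of_ne_of_ne (ne_of_mem_of_not_mem ha hm).symm
      (ne_of_mem_of_not_mem hb hm).symm]
  have hv := agree (hTS hi) (hTS hj)
  have hw := agree (hTS hk) (hTS hl)
  exact Subgroup.subset_closure ⟨S, u, _, _, hS, huv, huw, hvw, hv, hw,
    (wordWeight_eq_iff_map_eq hv).mp (wordWeight_comp_perm u _).symm,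
    (wordWeight_eq_iff_map_eq hw).mp (wordWeight_comp_perm u _).symm, rfl⟩

theorem swap_mul_swap_comp_swap_mem_closure (hn : 3 ≤ n) {u : Fin n → A} {i j k l : Fin n}
    (huv : u ≠ u ∘ swap i j) (huw : u ≠ u ∘ swap k l) (hvw : u ∘ swap i j ≠ u ∘ swap k l) :
    swap u (u ∘ swap k l) * swap u (u ∘ swap i j) ∈
      Subgroup.closure (localThreeCycles A n) := by
  by_cases hoverlap : k ∈ ({i, j} : Finset _) ∨ l ∈ ({i, j} : Finset _)
  · have hT : #(insert k (insert l {i, j})) ≤ 3 := by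
      rcases hoverlap with h | h <;> simp [h, card_le_three]
    exact swap_mul_swap_comp_swap_mem_closure_of_card_le_three hn hT
      (by simp) (by simp) (by simp) (by simp) huv huw hvw
  simp only [mem_insert, mem_singleton, not_or] at hoverlap
  obtain ⟨⟨hki, hkj⟩, hli, hlj⟩ := hoverlap
  have hkl : u k ≠ u l := fun h => huw (comp_swap_eq_self_iff.mpr h).symm
  obtain ⟨b, hb, hib⟩ : ∃ b, (b = k ∨ b = l) ∧ u i ≠ u b := by
    by_cases h : u i = u k
    · exact ⟨l, Or.inr rfl, h ▸ hkl⟩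
    · exact ⟨k, Or.inl rfl, h⟩
  have hbi : b ≠ i := by rintro rfl; exact hib rfl
  have hbj : b ≠ j := by rcases hb with rfl | rfl <;> assumption
  have hut : u ≠ u ∘ swap i b := fun h => hib (comp_swap_eq_self_iff.mp h.symm)
  have htw : u ∘ swap i b ≠ u ∘ swap k l := fun h => hib <| by
    simpa [swap_apply_of_ne_of_ne (Ne.symm hki) (Ne.symm hli)] using (congrFun h i).symm
  have hvt : u ∘ swap i j ≠ u ∘ swap i b := fun h => hib <| by
    simpa [swap_apply_of_ne_of_ne hbi hbj] using (congrFun h b).symm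
  rw [Perm.swap_mul_swap_eq_mul u _ _ (u ∘ swap i b)]
  refine mul_mem ?_ ?_
  · exact swap_mul_swap_comp_swap_mem_closure_of_card_le_three (T := {i, k, l}) hn
      card_le_three (by simp) (by rcases hb with rfl | rfl <;> simp) (by simp) (by simp)
      hut huw htw
  · exact swap_mul_swap_comp_swap_mem_closure_of_card_le_three (T := {i, j, b}) hn
      card_le_three (by simp) (by simp) (by simp) (by simp) huv hut hvt

variable [Fintype A]

theorem alternatingGroup_le_comap_closure_localThreeCycles (hn : 3 ≤ n) (c : Multiset A) :
    alternatingGroup {x : Fin n → A // wordWeight x = c} ≤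
      (Subgroup.closure (localThreeCycles A n)).comap Perm.ofSubtype := by
  refine Perm.alternatingGroup_le_of_preconnected (swapGraph_preconnected c) ?_
  rintro a b x ⟨hab, i, j, hb⟩ ⟨hax, k, l, hx⟩ hbx
  have hab' := Subtype.coe_ne_coe.mpr hab
  have hax' := Subtype.coe_ne_coe.mpr hax
  have hbx' := Subtype.coe_ne_coe.mpr hbx
  rw [hb] at hab' hbx'
  rw [hx] at hax' hbx'
  rw [Subgroup.mem_comap, map_mul, Perm.ofSubtype_swap_eq, Perm.ofSubtype_swap_eq, hb, hx]
  exact swap_mul_swap_comp_swap_mem_closure hn hab' hax' hbx'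

theorem closure_localThreeCycles_le_fiberwiseAlternating :
    Subgroup.closure (localThreeCycles A n) ≤ Perm.fiberwiseAlternating wordWeight := by
  rw [Subgroup.closure_le]
  rintro σ ⟨S, x, y, z, -, hxy, hxz, hyz, hy, hz, hmy, hmz, rfl⟩
  have hwy := (wordWeight_eq_iff_map_eq hy).mpr hmy
  have hwz := (wordWeight_eq_iff_map_eq hz).mpr hmz
  refine Perm.mem_fiberwiseAlternating_of_sign_eq_one (c₀ := wordWeight x) (fun t ht => ?_)
    (Perm.isThreeCycle_swap_mul_swap_same hxz hxy hyz.symm).sign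
  by_contra hwt
  have htx : t ≠ x := by rintro rfl; exact hwt rfl
  have hty : t ≠ y := by rintro rfl; exact hwt hwy.symm
  have htz : t ≠ z := by rintro rfl; exact hwt hwz.symm
  exact ht (by simp [swap_apply_of_ne_of_ne, htx, hty, htz])

end Words

/-- **Local 3-cycles generate the alternating conservative group.**
Let `A` be a finite type and `n ≥ 3`.  A permutation of `Fin n → A` is alternating
conservative if and only if it lies in the subgroup of `Perm (Fin n → A)` generated by
the 3-cycles `(x y z)` (i.e. `x ↦ y ↦ z ↦ x`) of triples of pairwise distinct words
that agree outside some 3-element subset `S` of the coordinates and whose restrictions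
to `S` have equal multisets of entries. -/
theorem altConservative_generated_by_local_threeCycles
    {A : Type*} [Fintype A] [DecidableEq A] (n : ℕ) (hn : 3 ≤ n)
    (g : Equiv.Perm (Fin n → A)) :
    g ∈ Subgroup.closure
        {σ : Equiv.Perm (Fin n → A) |
          ∃ (S : Finset (Fin n)) (x y z : Fin n → A),
            S.card = 3 ∧ x ≠ y ∧ x ≠ z ∧ y ≠ z ∧
            (∀ i ∉ S, x i = y i) ∧ (∀ i ∉ S, x i = z i) ∧
            Multiset.map x S.val = Multiset.map y S.val ∧
            Multiset.map x S.val = Multiset.map z S.val ∧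
            σ = Equiv.swap x z * Equiv.swap x y} ↔
      IsAltConservative g := by
  change g ∈ Subgroup.closure (localThreeCycles A n) ↔
    g ∈ Equiv.Perm.fiberwiseAlternating wordWeight
  refine ⟨fun hg => closure_localThreeCycles_le_fiberwiseAlternating hg, fun hg => ?_⟩
  refine Equiv.Perm.mem_of_forall_ofSubtype_subtypePerm_mem hg.1 fun c => ?_
  exact alternatingGroup_le_comap_closure_localThreeCycles hn c
    (Equiv.Perm.mem_alternatingGroup.mpr (hg.2 c fun x => by rw [hg.1]))
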